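/- If T1 and T2 are unrooted binary trees on n labeled leaves with d_k(T1,T2) = n − 3 (the maximal possible value), then at least one of T1, T2 is a caterpillar tree. -/

import Mathlib

open Finset
open scoped Classical

noncomputable section

/-- An unrooted binary phylogenetic tree with `n` labeled leaves (`Sum.inl`)
and `n - 2` internal vertices (`Sum.inr`): a connected acyclic graph in which
every leaf has degree 1 and every internal vertex has degree 3. -/
def UTree (n : ℕ) : Type :=
  {G : SimpleGraph (Fin n ⊕ Fin (n - 2)) //
    G.Connected ∧ G.IsAcyclic ∧
    (∀ i : Fin n, G.degree (Sum.inl i) = 1) ∧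
    (∀ j : Fin (n - 2), G.degree (Sum.inr j) = 3)}

instance (n : ℕ) : Fintype (UTree n) := by
  unfold UTree; infer_instance

/-- The number of edges on the unique path between leaves `i` and `j`. -/
def leafDist {n : ℕ} (T : UTree n) (i j : Fin n) : ℕ :=
  T.1.dist (Sum.inl i) (Sum.inl j)

/-- The set of pairs `(i, j)` of leaves with `i < j`. -/
def leafPairs (n : ℕ) : Finset (Fin n × Fin n) :=
  univ.filter (fun p => p.1 < p.2)

/-- Edge difference distance: the `l₁` distance between vectorizations. -/
def d_e {n : ℕ} (T1 T2 : UTree n) : ℝ :=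
  ∑ p ∈ leafPairs n, |(leafDist T1 p.1 p.2 : ℝ) - (leafDist T2 p.1 p.2 : ℝ)|

/-- Path difference distance: the `l₂` distance between vectorizations. -/
def d_p {n : ℕ} (T1 T2 : UTree n) : ℝ :=
  Real.sqrt (∑ p ∈ leafPairs n, ((leafDist T1 p.1 p.2 : ℝ) - (leafDist T2 p.1 p.2 : ℝ)) ^ 2)

/-- Precise K-interval cospeciation distance: the `l_∞` distance between vectorizations. -/
def d_k {n : ℕ} (T1 T2 : UTree n) : ℕ :=
  (leafPairs n).sup (fun p => Nat.dist (leafDist T1 p.1 p.2) (leafDist T2 p.1 p.2))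

/-- Two trees are identified in `T_n` when there is a graph isomorphism fixing every leaf. -/
def LeafIso {n : ℕ} (T1 T2 : UTree n) : Prop :=
  ∃ e : (Fin n ⊕ Fin (n - 2)) ≃ (Fin n ⊕ Fin (n - 2)),
    (∀ i : Fin n, e (Sum.inl i) = Sum.inl i) ∧
    ∀ a b, T1.1.Adj a b ↔ T2.1.Adj (e a) (e b)

/-- A caterpillar tree: the internal vertices can be arranged along a path. -/
def Caterpillar {n : ℕ} (T : UTree n) : Prop :=
  ∃ σ : Fin (n - 2) ≃ Fin (n - 2), ∀ a b : Fin (n - 2),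
    T.1.Adj (Sum.inr a) (Sum.inr b) ↔ Nat.dist ((σ a) : ℕ) ((σ b) : ℕ) = 1

end

/-!
Choose a pair of leaves realising `d_k T1 T2 = n - 3`. Distinct leaves of a binary tree with
`n ≥ 4` leaves are never adjacent, so both trees separate the pair by at least `2`, and one of
them by at least `n - 1`. The interior vertices of a geodesic are internal (a leaf cannot be
passed through) and pairwise distinct, so a geodesic of length at least `n - 1` runs through all
`n - 2` internal vertices in a row, and by minimality two of them are adjacent exactly when they
are consecutive on it: the tree is a caterpillar.
-/

namespace SimpleGraph

variable {V : Type*} {G : SimpleGraph V} {u v : V}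

/-- Every segment of a shortest walk is itself a shortest walk. -/
theorem Walk.dist_getVert_getVert_of_length_eq_dist (p : G.Walk u v)
    (hp : p.length = G.dist u v) {s t : ℕ} (hs : s ≤ p.length) (ht : t ≤ p.length) :
    G.dist (p.getVert s) (p.getVert t) = Nat.dist s t := by
  wlog hst : s ≤ t generalizing s t
  · rw [dist_comm, Nat.dist_comm, this ht hs (by omega)]
  have hsub : ((p.drop s).take (t - s)).IsSubwalk p :=
    ((p.drop s).isSubwalk_take _).trans (p.isSubwalk_drop s)
  have h := length_eq_dist_of_subwalk hp hsub
  rw [Walk.take_length, Walk.drop_length, Walk.drop_getVert, Nat.add_sub_cancel' hst] at h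
  rw [← h, Nat.dist_eq_sub_of_le hst]
  omega

theorem Walk.one_lt_degree_getVert_of_length_eq_dist [G.LocallyFinite] (p : G.Walk u v)
    (hp : p.length = G.dist u v) {k : ℕ} (hk₀ : 0 < k) (hk : k < p.length) :
    1 < G.degree (p.getVert k) := by
  have hprev : G.Adj (p.getVert k) (p.getVert (k - 1)) := by
    have := p.adj_getVert_succ (i := k - 1) (by omega)
    rwa [Nat.sub_add_cancel hk₀, adj_comm] at this
  have hnext : G.Adj (p.getVert k) (p.getVert (k + 1)) := p.adj_getVert_succ hk
  have hne : p.getVert (k - 1) ≠ p.getVert (k + 1) := by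
    intro heq
    have := p.dist_getVert_getVert_of_length_eq_dist hp (s := k - 1) (t := k + 1)
      (by omega) (by omega)
    rw [heq, dist_self, Nat.dist_eq_sub_of_le (by omega)] at this
    omega
  rw [← card_neighborFinset_eq_degree, Finset.one_lt_card]
  exact ⟨_, (mem_neighborFinset ..).mpr hprev, _, (mem_neighborFinset ..).mpr hnext, hne⟩

/-- A shortest walk to a third vertex would pass through one of the two in its interior. -/
theorem Connected.eq_or_eq_of_adj_of_degree_eq_one [G.LocallyFinite] (hc : G.Connected)
    (huv : G.Adj u v) (hu : G.degree u = 1) (hv : G.degree v = 1) (w : V) : w = u ∨ w = v := by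
  obtain ⟨x, -, hx⟩ := degree_eq_one_iff_existsUnique_adj.mp hu
  by_contra! hw
  obtain ⟨p, hp⟩ := hc.exists_walk_length_eq_dist u w
  have hnadj : ¬G.Adj u w := fun h => hw.2 ((hx w h).trans (hx v huv).symm)
  have hlen : 1 < p.length := hp ▸ hc.one_lt_dist_of_ne_of_not_adj hw.1.symm hnadj
  have hsnd : p.getVert 1 = v :=
    (hx _ (by simpa using p.adj_getVert_succ (i := 0) (by omega))).trans (hx v huv).symm
  have := p.one_lt_degree_getVert_of_length_eq_dist hp one_pos hlen
  rw [hsnd, hv] at this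
  exact lt_irrefl 1 this

end SimpleGraph

open SimpleGraph

namespace UTree

variable {n : ℕ}

theorem exists_eq_inr_of_one_lt_degree (T : UTree n) {x : Fin n ⊕ Fin (n - 2)}
    (hx : 1 < T.1.degree x) : ∃ b, x = Sum.inr b := by
  rcases x with i | b
  · exact absurd (T.2.2.2.1 i) hx.ne'
  · exact ⟨b, rfl⟩

theorem not_adj_leaves (hn : 4 ≤ n) (T : UTree n) (i j : Fin n) :
    ¬T.1.Adj (Sum.inl i) (Sum.inl j) := fun h => by
  simpa using T.2.1.eq_or_eq_of_adj_of_degree_eq_one h (T.2.2.2.1 i) (T.2.2.2.1 j)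
    (Sum.inr ⟨0, by omega⟩)

theorem two_le_leafDist (hn : 4 ≤ n) (T : UTree n) {i j : Fin n} (hij : i ≠ j) :
    2 ≤ leafDist T i j :=
  T.2.1.one_lt_dist_of_ne_of_not_adj (by simpa using hij) (T.not_adj_leaves hn i j)

theorem caterpillar_of_injective (T : UTree n) (f : Fin (n - 2) → Fin (n - 2))
    (hf : Function.Injective f)
    (hadj : ∀ a b, T.1.Adj (Sum.inr (f a)) (Sum.inr (f b)) ↔ Nat.dist a b = 1) :
    Caterpillar T := by
  let e := Equiv.ofBijective f hf.bijective_of_finite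
  refine ⟨e.symm, fun a b => ?_⟩
  have h := hadj (e.symm a) (e.symm b)
  rwa [Equiv.ofBijective_apply_symm_apply f, Equiv.ofBijective_apply_symm_apply f] at h

/-- The `n - 2` interior vertices of a geodesic between two leaves at distance at least
`n - 1` are distinct internal vertices, hence all of them, laid out along a path. -/
theorem caterpillar_of_le_leafDist (T : UTree n) {i j : Fin n}
    (h : n - 1 ≤ leafDist T i j) : Caterpillar T := by
  obtain ⟨p, hp⟩ := T.2.1.exists_walk_length_eq_dist (Sum.inl i) (Sum.inl j)
  have hlen : n - 1 ≤ p.length := hp ▸ h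
  have hinternal : ∀ m : Fin (n - 2), ∃ b, p.getVert (m + 1) = Sum.inr b := fun m =>
    T.exists_eq_inr_of_one_lt_degree
      (p.one_lt_degree_getVert_of_length_eq_dist hp (by omega) (by omega))
  choose f hf using hinternal
  have hdist : ∀ a b, T.1.dist (Sum.inr (f a)) (Sum.inr (f b)) = Nat.dist a b := fun a b => by
    rw [← hf, ← hf, p.dist_getVert_getVert_of_length_eq_dist hp (by omega) (by omega),
      Nat.dist_add_add_right]
  refine T.caterpillar_of_injective f (fun a b hab => Fin.ext ?_) (fun a b => ?_)
  · exact Nat.eq_of_dist_eq_zero (by rw [← hdist, hab, dist_self])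
  · rw [← dist_eq_one_iff_adj, hdist]

end UTree

theorem exists_ne_nat_dist_leafDist_eq_d_k {n : ℕ} (hn : 2 ≤ n) (T1 T2 : UTree n) :
    ∃ i j : Fin n, i ≠ j ∧ Nat.dist (leafDist T1 i j) (leafDist T2 i j) = d_k T1 T2 := by
  have hne : (leafPairs n).Nonempty :=
    ⟨(⟨0, by omega⟩, ⟨1, by omega⟩), by simp [leafPairs]⟩
  obtain ⟨q, hq, hmax⟩ := exists_mem_eq_sup _ hne
    (fun p => Nat.dist (leafDist T1 p.1 p.2) (leafDist T2 p.1 p.2))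
  exact ⟨q.1, q.2, (mem_filter.mp hq).2.ne, hmax.symm⟩

/-- If two unrooted binary trees on `n` labeled leaves attain the maximal
possible precise K-interval cospeciation distance `n - 3`, then at least one
of them is a caterpillar tree. -/
theorem kic_max_implies_caterpillar (n : ℕ) (hn : 4 ≤ n) (T1 T2 : UTree n)
    (h : d_k T1 T2 = n - 3) :
    Caterpillar T1 ∨ Caterpillar T2 := by
  obtain ⟨i, j, hij, hmax⟩ := exists_ne_nat_dist_leafDist_eq_d_k (by omega) T1 T2
  have h1 := T1.two_le_leafDist hn hij
  have h2 := T2.two_le_leafDist hn hij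
  rw [h, Nat.dist] at hmax
  by_cases hlong : n - 1 ≤ leafDist T1 i j
  · exact .inl (T1.caterpillar_of_le_leafDist hlong)
  · exact .inr (T2.caterpillar_of_le_leafDist (i := i) (j := j) (by omega))
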